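/- If k₁,…,kₙ are natural numbers with each kᵢ ∈ {1,2} and n ≥ 1, then k₁+⋯+kₙ ≤ Σ over all tuples (j₁,…,jₙ) with jᵢ ∈ {1,…,kᵢ} of the multinomial coefficient (m₁+⋯+mₙ)!/(m₁!⋯mₙ!), where each mᵢ ≥ 1 is any fixed positive trace length assigned to the jᵢ-th trace of child i. -/

import Mathlib

/-!
Every multinomial coefficient of `n` positive lengths is at least `n`: splitting off one
length `a ≥ 1` from the rest, of total `b ≥ n - 1`, leaves the factor `(a + b).choose a ≥ b + 1`.
Hence the right-hand side, a sum of `∏ kᵢ` such coefficients, is at least `n ∏ kᵢ`, which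
dominates `∑ kᵢ` as soon as every `kᵢ ≥ 1`.
-/

open Finset

theorem Nat.succ_le_add_choose {a : ℕ} (b : ℕ) (ha : 1 ≤ a) : b + 1 ≤ (a + b).choose a := by
  rw [Nat.choose_symm_add, ← Nat.choose_succ_self_right]
  exact Nat.choose_le_choose b (by omega)

theorem Nat.card_le_multinomial {ι : Type*} {s : Finset ι} {f : ι → ℕ}
    (hf : ∀ i ∈ s, 1 ≤ f i) : #s ≤ Nat.multinomial s f := by
  classical
  rcases s.eq_empty_or_nonempty with rfl | ⟨a, ha⟩
  · simp
  rw [← insert_erase ha, Nat.multinomial_insert (notMem_erase a s),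
    card_insert_of_notMem (notMem_erase a s)]
  have hcard : #(s.erase a) ≤ ∑ i ∈ s.erase a, f i :=
    (card_eq_sum_ones _).trans_le <| sum_le_sum fun i hi => hf i (mem_of_mem_erase hi)
  calc #(s.erase a) + 1
      ≤ (f a + ∑ i ∈ s.erase a, f i).choose (f a) :=
        (Nat.succ_le_add_choose _ (hf a ha)).trans' (by omega)
    _ ≤ _ := Nat.le_mul_of_pos_right _ (Nat.multinomial_pos _ _)

theorem Finset.sum_le_card_mul_prod {ι : Type*} {s : Finset ι} {f : ι → ℕ}
    (hf : ∀ i ∈ s, 1 ≤ f i) : ∑ i ∈ s, f i ≤ #s * ∏ i ∈ s, f i := by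
  rw [← smul_eq_mul, ← sum_const]
  exact sum_le_sum fun i hi => single_le_prod' hf hi

theorem stmt_4_general {n : ℕ} (k : Fin n → ℕ)
    (hk : ∀ i, k i = 1 ∨ k i = 2)
    (m : (i : Fin n) → Fin (k i) → ℕ) (hm : ∀ i j, 1 ≤ m i j) :
    ∑ i, k i ≤
      ∑ j : (i : Fin n) → Fin (k i),
        Nat.multinomial Finset.univ (fun i => m i (j i)) := by
  have hk_pos : ∀ i ∈ univ, 1 ≤ k i := fun i _ => by rcases hk i with h | h <;> omega
  calc ∑ i, k i
      ≤ n * ∏ i, k i := by simpa using sum_le_card_mul_prod hk_pos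
    _ = #(univ : Finset ((i : Fin n) → Fin (k i))) • n := by
        simp [Fintype.card_pi, mul_comm]
    _ ≤ _ := card_nsmul_le_sum _ _ _ fun j _ => by
        simpa using Nat.card_le_multinomial (s := univ) fun i _ => hm i (j i)

/-- If `k₁,…,kₙ ∈ {1,2}` and `n ≥ 1`, then `k₁+⋯+kₙ` is at most the sum, over all
tuples `(j₁,…,jₙ)` with `jᵢ ∈ {1,…,kᵢ}`, of the multinomial coefficients of the
corresponding positive trace lengths `mᵢ(jᵢ) ≥ 1`. -/
theorem stmt_4 {n : ℕ} (hn : 1 ≤ n) (k : Fin n → ℕ)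
    (hk : ∀ i, k i = 1 ∨ k i = 2)
    (m : (i : Fin n) → Fin (k i) → ℕ) (hm : ∀ i j, 1 ≤ m i j) :
    ∑ i, k i ≤
      ∑ j : (i : Fin n) → Fin (k i),
        Nat.multinomial Finset.univ (fun i => m i (j i)) :=
  stmt_4_general k hk m hm
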